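/- The matrix M = [[cos θ, -sin θ, 1, 0],[sin θ, cos θ, 0, -1],[r²cos 2θ - 1, -r²sin 2θ, r cos θ, r sin θ],[-r²sin 2θ, r²cos 2θ - 1, -r sin θ, r cos θ]] with first block A = r·(rotation by θ) is symplectic and its characteristic polynomial has roots λ, λ̄, 1/λ, 1/λ̄ where λ = re^{iθ} + sqrt(r²e^{2iθ} - 1), provided r > 0, θ ∈ (0,π), and r e^{iθ} ∉ ℝ. -/

import Mathlib

open Matrix Real Complex

private lemma charpoly_eval_aux {n : Type*} [Fintype n] [DecidableEq n]
    (M : Matrix n n ℂ) (x : ℂ) :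
    (Polynomial.eval x M.charpoly) = (x • (1 : Matrix n n ℂ) - M).det := by
  rw [Matrix.charpoly, ← Polynomial.coe_evalRingHom, RingHom.map_det]
  congr 1
  ext i j
  by_cases h : i = j
  · subst h; simp [Matrix.charmatrix_apply_eq, Matrix.one_apply]
  · simp [Matrix.charmatrix_apply_ne _ _ _ h, Matrix.one_apply, h]

set_option maxHeartbeats 2000000 in
private lemma charpoly_factor_aux (r θ : ℝ) (x : ℂ) :
    Polynomial.eval x (((fromBlocks
        !![r * Real.cos θ, -(r * Real.sin θ); r * Real.sin θ, r * Real.cos θ]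
        !![1, 0; 0, -1]
        !![r^2 * (Real.cos θ^2 - Real.sin θ^2) - 1, -(2*r^2*Real.sin θ*Real.cos θ);
           -(2*r^2*Real.sin θ*Real.cos θ), -(r^2 * (Real.cos θ^2 - Real.sin θ^2) - 1)]
        !![r * Real.cos θ, r * Real.sin θ; -(r * Real.sin θ), r * Real.cos θ]).map
          Complex.ofReal).charpoly) =
    (x^2 - 2*(r:ℂ)*(Complex.cos (θ:ℂ) + Complex.sin (θ:ℂ) * Complex.I)*x + 1) *
    (x^2 - 2*(r:ℂ)*(Complex.cos (θ:ℂ) - Complex.sin (θ:ℂ) * Complex.I)*x + 1) := by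
  rw [charpoly_eval_aux, ← Matrix.det_reindex_self finSumFinEquiv]
  rw [show (reindex finSumFinEquiv finSumFinEquiv)
      (x • (1 : Matrix (Fin 2 ⊕ Fin 2) (Fin 2 ⊕ Fin 2) ℂ) - _) =
      !![x - r * Real.cos θ, r * Real.sin θ, -1, 0;
         -(r * Real.sin θ), x - r * Real.cos θ, 0, 1;
         -((r:ℂ)^2 * ((Real.cos θ:ℂ)^2 - (Real.sin θ:ℂ)^2) - 1), 2*r^2*Real.sin θ*Real.cos θ,
           x - r * Real.cos θ, -(r * Real.sin θ);
         2*(r:ℂ)^2*Real.sin θ*Real.cos θ, (r:ℂ)^2 * ((Real.cos θ:ℂ)^2 - (Real.sin θ:ℂ)^2) - 1,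
           r * Real.sin θ, x - r * Real.cos θ] from by
    have e0 : finSumFinEquiv.symm (0 : Fin 4) = (Sum.inl 0 : Fin 2 ⊕ Fin 2) := rfl
    have e1 : finSumFinEquiv.symm (1 : Fin 4) = (Sum.inl 1 : Fin 2 ⊕ Fin 2) := rfl
    have e2 : finSumFinEquiv.symm (2 : Fin 4) = (Sum.inr 0 : Fin 2 ⊕ Fin 2) := rfl
    have e3 : finSumFinEquiv.symm (3 : Fin 4) = (Sum.inr 1 : Fin 2 ⊕ Fin 2) := rfl
    ext i j
    fin_cases i <;> fin_cases j <;>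
      simp [Matrix.reindex_apply, Matrix.submatrix_apply, e0, e1, e2, e3, fromBlocks,
        Matrix.one_apply]]
  simp [Matrix.det_succ_row_zero, Fin.sum_univ_succ, Matrix.submatrix_apply, Fin.succAbove]
  linear_combination (2*(r:ℂ)*Complex.sin (θ:ℂ)*x)^2 * Complex.I_sq

set_option maxHeartbeats 2000000 in
theorem stmt_12 (r θ : ℝ) (hr : 0 < r) (hθ : θ ∈ Set.Ioo 0 Real.pi)
    (A B C : Matrix (Fin 2) (Fin 2) ℝ)
    (hA : A = r • !![Real.cos θ, -Real.sin θ; Real.sin θ, Real.cos θ])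
    (hB : B = !![1, 0; 0, -1])
    (hC : C = B * (A * A - 1))
    (J : Matrix (Fin 2 ⊕ Fin 2) (Fin 2 ⊕ Fin 2) ℝ)
    (hJ : J = fromBlocks 0 1 (-1) 0) :
    let M := fromBlocks A B C Aᵀ
    Mᵀ * J * M = J ∧
    ∀ w : ℂ, w ^ 2 = ((r : ℂ) * Complex.exp (θ * Complex.I)) ^ 2 - 1 →
      let lam := (r : ℂ) * Complex.exp (θ * Complex.I) + w
      (M.map (Complex.ofReal)).charpoly.eval lam = 0 ∧
      (M.map (Complex.ofReal)).charpoly.eval ((starRingEnd ℂ) lam) = 0 ∧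
      (M.map (Complex.ofReal)).charpoly.eval lam⁻¹ = 0 ∧
      (M.map (Complex.ofReal)).charpoly.eval (((starRingEnd ℂ) lam)⁻¹) = 0 := by
  have hA' : A = !![r * Real.cos θ, -(r * Real.sin θ); r * Real.sin θ, r * Real.cos θ] := by
    rw [hA]; ext i j; fin_cases i <;> fin_cases j <;> simp [Matrix.smul_apply]
  have hAT : Aᵀ = !![r * Real.cos θ, r * Real.sin θ; -(r * Real.sin θ), r * Real.cos θ] := by
    rw [hA']; ext i j; fin_cases i <;> fin_cases j <;> simp
  have hC' : C = !![r^2 * (Real.cos θ^2 - Real.sin θ^2) - 1, -(2*r^2*Real.sin θ*Real.cos θ);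
      -(2*r^2*Real.sin θ*Real.cos θ), -(r^2 * (Real.cos θ^2 - Real.sin θ^2) - 1)] := by
    rw [hC, hB, hA', Matrix.one_fin_two]
    ext i j; fin_cases i <;> fin_cases j <;>
      simp [Matrix.mul_apply, Fin.sum_univ_succ] <;> ring
  intro M
  constructor
  · have h1 := Real.sin_sq_add_cos_sq θ
    show (fromBlocks A B C Aᵀ)ᵀ * J * (fromBlocks A B C Aᵀ) = J
    subst hB hJ
    rw [hC', hAT, hA']
    ext i j
    rcases i with i | i <;> rcases j with j | j <;> fin_cases i <;> fin_cases j <;>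
      simp [Matrix.mul_apply, Fintype.sum_sum_type, Fin.sum_univ_succ, fromBlocks,
        Matrix.one_apply] <;> nlinarith [h1]
  · intro w hw
    intro lam
    have key : ∀ x : ℂ, (M.map Complex.ofReal).charpoly.eval x =
        (x^2 - 2*(r:ℂ)*(Complex.cos (θ:ℂ) + Complex.sin (θ:ℂ) * Complex.I)*x + 1) *
        (x^2 - 2*(r:ℂ)*(Complex.cos (θ:ℂ) - Complex.sin (θ:ℂ) * Complex.I)*x + 1) := by
      intro x
      show Polynomial.eval x ((fromBlocks A B C Aᵀ).map Complex.ofReal).charpoly = _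
      rw [hC', hAT, hA', hB]
      exact charpoly_factor_aux r θ x
    have hE : Complex.exp ((θ : ℂ) * Complex.I) =
        Complex.cos (θ:ℂ) + Complex.sin (θ:ℂ) * Complex.I := by rw [Complex.exp_mul_I]
    have hlam : lam = (r:ℂ) * (Complex.cos (θ:ℂ) + Complex.sin (θ:ℂ) * Complex.I) + w := by
      show (r : ℂ) * Complex.exp (θ * Complex.I) + w = _
      rw [hE]
    have hw' : w ^ 2 = ((r:ℂ) * (Complex.cos (θ:ℂ) + Complex.sin (θ:ℂ) * Complex.I))^2 - 1 := by
      rw [← hE]; exact hw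
    -- conjugates
    have hcc : (starRingEnd ℂ) (Complex.cos (θ:ℂ)) = Complex.cos (θ:ℂ) := by
      rw [← Complex.ofReal_cos, Complex.conj_ofReal]
    have hcs : (starRingEnd ℂ) (Complex.sin (θ:ℂ)) = Complex.sin (θ:ℂ) := by
      rw [← Complex.ofReal_sin, Complex.conj_ofReal]
    have hlamc : (starRingEnd ℂ) lam =
        (r:ℂ) * (Complex.cos (θ:ℂ) - Complex.sin (θ:ℂ) * Complex.I) + (starRingEnd ℂ) w := by
      rw [hlam, map_add, _root_.map_mul, Complex.conj_ofReal, map_add, _root_.map_mul,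
        hcc, hcs, Complex.conj_I]
      ring
    have hwc : ((starRingEnd ℂ) w) ^ 2 =
        ((r:ℂ) * (Complex.cos (θ:ℂ) - Complex.sin (θ:ℂ) * Complex.I))^2 - 1 := by
      have := congrArg (starRingEnd ℂ) hw'
      simp only [map_pow, map_sub, _root_.map_mul, _root_.map_one, map_add, Complex.conj_ofReal,
        hcc, hcs, Complex.conj_I] at this
      rw [this]; ring
    -- first factor vanishes at lam
    have h1 : lam^2 - 2*(r:ℂ)*(Complex.cos (θ:ℂ) + Complex.sin (θ:ℂ) * Complex.I)*lam + 1 = 0 := by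
      rw [hlam]; linear_combination hw'
    -- second factor vanishes at conj lam
    have h2 : ((starRingEnd ℂ) lam)^2
        - 2*(r:ℂ)*(Complex.cos (θ:ℂ) - Complex.sin (θ:ℂ) * Complex.I)*((starRingEnd ℂ) lam)
        + 1 = 0 := by
      rw [hlamc]; linear_combination hwc
    have hlam0 : lam ≠ 0 := by
      intro h; rw [h] at h1; simp at h1
    have hlamc0 : (starRingEnd ℂ) lam ≠ 0 := by
      intro h; rw [h] at h2; simp at h2
    have inv_lemma : ∀ (x c : ℂ), x ≠ 0 → x^2 - c*x + 1 = 0 → x⁻¹^2 - c*x⁻¹ + 1 = 0 := by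
      intro x c hx h
      have hx2 : x⁻¹^2 - c*x⁻¹ + 1 = x⁻¹^2 * (x^2 - c*x + 1) := by
        field_simp
        ring
      rw [hx2, h, mul_zero]
    refine ⟨?_, ?_, ?_, ?_⟩
    · rw [key, h1, zero_mul]
    · rw [key, h2, mul_zero]
    · rw [key]
      rw [inv_lemma lam _ hlam0 h1, zero_mul]
    · rw [key]
      rw [inv_lemma ((starRingEnd ℂ) lam) _ hlamc0 h2, mul_zero]
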